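/- If h² ≥ ξ″ − ξ′, then (η*,γ*) belongs to [√2,∞)×[0,1) and is the unique pair (η,γ) ∈ [√2,∞)×[0,1) satisfying both A·γ − B·η = √(η²−2) and C·γ + A·η = γ/(1−γ²). If instead h² < ξ″ − ξ′, then no pair (η,γ) ∈ [√2,∞)×[0,1) satisfies both equations. -/

import Mathlib

set_option maxHeartbeats 1000000


/-- A = 2h̃/(1+a) with h̃ = h/√(2ξ″), a = ξ′/ξ″. -/
noncomputable def A (ξ' ξ'' h : ℝ) : ℝ := 2 * (h / Real.sqrt (2 * ξ'')) / (1 + ξ' / ξ'')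

/-- B = (1−a)/(1+a) with a = ξ′/ξ″. -/
noncomputable def B (ξ' ξ'' : ℝ) : ℝ := (1 - ξ' / ξ'') / (1 + ξ' / ξ'')

/-- C = 2h̃²/((1+a)·a) with h̃ = h/√(2ξ″), a = ξ′/ξ″. -/
noncomputable def C (ξ' ξ'' h : ℝ) : ℝ :=
  2 * (h / Real.sqrt (2 * ξ'')) ^ 2 / ((1 + ξ' / ξ'') * (ξ' / ξ''))

/-- γ* = h/√(ξ′+h²). -/
noncomputable def γstar (ξ' h : ℝ) : ℝ := h / Real.sqrt (ξ' + h ^ 2)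

/-- η* = (ξ′+ξ″+h²)/√(2ξ″(ξ′+h²)). -/
noncomputable def ηstar (ξ' ξ'' h : ℝ) : ℝ :=
  (ξ' + ξ'' + h ^ 2) / Real.sqrt (2 * ξ'' * (ξ' + h ^ 2))

lemma hA5 (ξ' ξ'' h : ℝ) (hξ' : 0 < ξ') (hξ'' : 0 < ξ'') :
    A ξ' ξ'' h = h * Real.sqrt (2*ξ'') / (ξ' + ξ'') := by
  unfold A
  set r := Real.sqrt (2*ξ'') with hrdef
  have hr : r^2 = 2*ξ'' := Real.sq_sqrt (by linarith)
  have hrp : 0 < r := Real.sqrt_pos.mpr (by linarith)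
  have h1 : (1 : ℝ) + ξ'/ξ'' = (ξ'+ξ'')/ξ'' := by field_simp; ring
  rw [h1, div_eq_div_iff (by positivity) (by positivity)]
  field_simp
  linear_combination (-h)*hr

lemma hB5 (ξ' ξ'' : ℝ) (hξ' : 0 < ξ') (hξ'' : 0 < ξ'') :
    B ξ' ξ'' = (ξ'' - ξ') / (ξ' + ξ'') := by
  unfold B
  rw [div_eq_div_iff (by positivity) (by positivity)]
  field_simp
  ring

lemma hC5 (ξ' ξ'' h : ℝ) (hξ' : 0 < ξ') (hξ'' : 0 < ξ'') :
    C ξ' ξ'' h = h^2 * ξ'' / ((ξ' + ξ'') * ξ') := by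
  unfold C
  set r := Real.sqrt (2*ξ'') with hrdef
  have hr : r^2 = 2*ξ'' := Real.sq_sqrt (by linarith)
  have hrp : 0 < r := Real.sqrt_pos.mpr (by linarith)
  rw [div_pow, hr]
  rw [div_eq_div_iff (by positivity) (by positivity)]
  field_simp
  ring

lemma hη5 (ξ' ξ'' h : ℝ) (hξ'' : 0 < ξ'') : ηstar ξ' ξ'' h =
    (ξ' + h^2 + ξ'') / (Real.sqrt (2*ξ'') * Real.sqrt (ξ' + h^2)) := by
  unfold ηstar
  rw [Real.sqrt_mul (by linarith)]
  ring_nf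

lemma gstar_nonneg (ξ' h : ℝ) (hh : 0 ≤ h) : 0 ≤ γstar ξ' h :=
  div_nonneg hh (Real.sqrt_nonneg _)

lemma gstar_lt_one (ξ' h : ℝ) (hξ' : 0 < ξ') (hh : 0 ≤ h) : γstar ξ' h < 1 := by
  unfold γstar
  have htp : 0 < Real.sqrt (ξ' + h^2) := Real.sqrt_pos.mpr (by nlinarith)
  rw [div_lt_one htp]
  have := Real.lt_sqrt hh (y := ξ' + h^2)
  rw [this]
  nlinarith

lemma etastar_ge (ξ' ξ'' h : ℝ) (hξ' : 0 < ξ') (hξ'' : 0 < ξ'') :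
    Real.sqrt 2 ≤ ηstar ξ' ξ'' h := by
  rw [hη5 ξ' ξ'' h hξ'']
  set r := Real.sqrt (2*ξ'') with hrdef
  set t := Real.sqrt (ξ' + h^2) with htdef
  have hr : r^2 = 2*ξ'' := Real.sq_sqrt (by linarith)
  have hrp : 0 < r := Real.sqrt_pos.mpr (by linarith)
  have ht : t^2 = ξ' + h^2 := Real.sq_sqrt (by nlinarith)
  have htp : 0 < t := Real.sqrt_pos.mpr (by nlinarith)
  have hpos : 0 < (ξ' + h^2 + ξ'') / (r*t) := by positivity
  rw [show (ξ' + h^2 + ξ'') / (r*t) = Real.sqrt (((ξ' + h^2 + ξ'')/(r*t))^2) from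
    (Real.sqrt_sq hpos.le).symm]
  apply Real.sqrt_le_sqrt
  rw [div_pow, le_div_iff₀ (by positivity)]
  have hrt : (r*t)^2 = 2*ξ''*(ξ'+h^2) := by
    rw [mul_pow, hr, ht]
  rw [hrt]
  nlinarith [sq_nonneg (ξ' + h^2 - ξ'')]

lemma eq1val (ξ' ξ'' h : ℝ) (hξ' : 0 < ξ') (hξ'' : 0 < ξ'') (hh : 0 ≤ h) :
    A ξ' ξ'' h * γstar ξ' h - B ξ' ξ'' * ηstar ξ' ξ'' h =
      (ξ' + h^2 - ξ'') / (Real.sqrt (2*ξ'') * Real.sqrt (ξ' + h^2)) := by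
  rw [hA5 ξ' ξ'' h hξ' hξ'', hB5 ξ' ξ'' hξ' hξ'', hη5 ξ' ξ'' h hξ'']
  unfold γstar
  set r := Real.sqrt (2*ξ'') with hrdef
  set t := Real.sqrt (ξ' + h^2) with htdef
  have hr : r^2 = 2*ξ'' := Real.sq_sqrt (by linarith)
  have hrp : 0 < r := Real.sqrt_pos.mpr (by linarith)
  have ht : t^2 = ξ' + h^2 := Real.sq_sqrt (by nlinarith)
  have htp : 0 < t := Real.sqrt_pos.mpr (by nlinarith)
  clear_value r t
  have hx2 : ξ'' = r^2/2 := by linarith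
  have hx1 : ξ' = t^2 - h^2 := by linarith
  subst hx2 hx1
  have hR : t^2 - h^2 + r^2/2 > 0 := by linarith
  field_simp
  ring

lemma sqstar (ξ' ξ'' h : ℝ) (hξ' : 0 < ξ') (hξ'' : 0 < ξ'') :
    (ηstar ξ' ξ'' h)^2 - 2 =
      ((ξ' + h^2 - ξ'') / (Real.sqrt (2*ξ'') * Real.sqrt (ξ' + h^2)))^2 := by
  rw [hη5 ξ' ξ'' h hξ'']
  set r := Real.sqrt (2*ξ'') with hrdef
  set t := Real.sqrt (ξ' + h^2) with htdef
  have hr : r^2 = 2*ξ'' := Real.sq_sqrt (by linarith)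
  have hrp : 0 < r := Real.sqrt_pos.mpr (by linarith)
  have ht : t^2 = ξ' + h^2 := Real.sq_sqrt (by nlinarith)
  have htp : 0 < t := Real.sqrt_pos.mpr (by nlinarith)
  clear_value r t
  have hx2 : ξ'' = r^2/2 := by linarith
  have hx1 : ξ' = t^2 - h^2 := by linarith
  subst hx2 hx1
  field_simp
  ring

lemma eq2star (ξ' ξ'' h : ℝ) (hξ' : 0 < ξ') (hξ'' : 0 < ξ'') (hh : 0 ≤ h) :
    C ξ' ξ'' h * γstar ξ' h + A ξ' ξ'' h * ηstar ξ' ξ'' h =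
      γstar ξ' h / (1 - (γstar ξ' h)^2) := by
  rw [hC5 ξ' ξ'' h hξ' hξ'', hA5 ξ' ξ'' h hξ' hξ'', hη5 ξ' ξ'' h hξ'']
  unfold γstar
  set r := Real.sqrt (2*ξ'') with hrdef
  set t := Real.sqrt (ξ' + h^2) with htdef
  have hr : r^2 = 2*ξ'' := Real.sq_sqrt (by linarith)
  have hrp : 0 < r := Real.sqrt_pos.mpr (by linarith)
  have ht : t^2 = ξ' + h^2 := Real.sq_sqrt (by nlinarith)
  have htp : 0 < t := Real.sqrt_pos.mpr (by nlinarith)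
  clear_value r t
  have hx2 : ξ'' = r^2/2 := by linarith
  have hx1 : ξ' = t^2 - h^2 := by linarith
  subst hx2 hx1
  have hd : 1 - (h/t)^2 > 0 := by
    rw [div_pow]
    have : h^2/t^2 < 1 := by
      rw [div_lt_one (by positivity)]
      nlinarith
    linarith
  have hR : t^2 - h^2 + r^2/2 > 0 := by linarith
  field_simp
  ring

lemma gstar_sq (ξ' h : ℝ) (hξ' : 0 < ξ') (hh : 0 ≤ h) :
    1 - (γstar ξ' h)^2 = ξ' / (ξ' + h^2) := by
  unfold γstar
  set t := Real.sqrt (ξ' + h^2) with htdef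
  have ht : t^2 = ξ' + h^2 := Real.sq_sqrt (by nlinarith)
  have htp : 0 < t := Real.sqrt_pos.mpr (by nlinarith)
  clear_value t
  have hx1 : ξ' = t^2 - h^2 := by linarith
  subst hx1
  field_simp
  ring

lemma keylemma (p q h g e w r : ℝ) (hp : 0 < p) (hq : 0 < q)
    (hr2 : r^2 = 2*q)
    (hw2 : w^2 = e^2 - 2)
    (hw : h*r*g - (q-p)*e = (p+q)*w)
    (hS : h*r*e*(p*(1-g^2)) = g*((p+q)*p - h^2*q*(1-g^2))) :
    h^2*(1-g^2) = p*g^2 := by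
  have hG1 : 2*q*h^2*g^2 - 2*h*r*g*(q-p)*e + 2*(p+q)^2 = 4*p*q*e^2 := by
    linear_combination (h*r*g - (q-p)*e + (p+q)*w)*hw + (p+q)^2*hw2 - h^2*g^2*hr2
  have hS2 : 2*q*h^2*e^2*p^2*(1-g^2)^2 =
      g^2*((p+q)*p - h^2*q*(1-g^2))^2 := by
    linear_combination (h*r*e*(p*(1-g^2)) + g*((p+q)*p - h^2*q*(1-g^2)))*hS
      - (h*e*p*(1-g^2))^2*hr2
  have hG1' : 2*q*h^2*g^2*(p*(1-g^2)) - 2*g^2*(q-p)*((p+q)*p - h^2*q*(1-g^2))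
      + 2*(p+q)^2*(p*(1-g^2)) = 4*p^2*q*(1-g^2)*e^2 := by
    linear_combination (p*(1-g^2))*hG1 + 2*g*(q-p)*hS
  have key : p^2*(p+q)^2*(h^2*(1-g^2) - p*g^2) = 0 := by
    linear_combination (p*(1-g^2)*h^2/2)*hG1' + p*hS2
  have hpq : p^2*(p+q)^2 ≠ 0 := by positivity
  have := mul_eq_zero.mp key
  rcases this with h1 | h2
  · exact absurd h1 hpq
  · linarith

lemma star_id (p q h r t : ℝ) (hp : 0 < p) (hq : 0 < q) (hh : 0 ≤ h)
    (hr : r^2 = 2*q) (hrp : 0 < r) (ht : t^2 = p + h^2) (htp : 0 < t) :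
    h*r*((p + h^2 + q)/(r*t))*(p*(1-(h/t)^2)) =
      (h/t)*((p+q)*p - h^2*q*(1-(h/t)^2)) := by
  have hx1 : p = t^2 - h^2 := by linarith
  subst hx1
  field_simp
  ring

lemma solve (ξ' ξ'' h : ℝ) (hξ' : 0 < ξ') (hξ'' : 0 < ξ'') (hh : 0 ≤ h)
    (η γ : ℝ) (hη2 : Real.sqrt 2 ≤ η) (hγ0 : 0 ≤ γ) (hγ1 : γ < 1)
    (e1 : A ξ' ξ'' h * γ - B ξ' ξ'' * η = Real.sqrt (η ^ 2 - 2))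
    (e2 : C ξ' ξ'' h * γ + A ξ' ξ'' h * η = γ / (1 - γ ^ 2)) :
    η = ηstar ξ' ξ'' h ∧ γ = γstar ξ' h := by
  have hsq2 : (2:ℝ) ≤ η^2 := by
    have h0 : (Real.sqrt 2)^2 ≤ η^2 :=
      pow_le_pow_left₀ (Real.sqrt_nonneg 2) hη2 2
    rwa [Real.sq_sqrt (by norm_num : (0:ℝ) ≤ 2)] at h0
  have hηpos : 0 < η := lt_of_lt_of_le (Real.sqrt_pos.mpr (by norm_num)) hη2
  have hd : 0 < 1 - γ^2 := by nlinarith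
  set w := Real.sqrt (η^2 - 2) with hwdef
  have hw0 : 0 ≤ w := Real.sqrt_nonneg _
  have hw2 : w^2 = η^2 - 2 := Real.sq_sqrt (by linarith)
  rw [hA5 ξ' ξ'' h hξ' hξ'', hB5 ξ' ξ'' hξ' hξ''] at e1
  rw [hC5 ξ' ξ'' h hξ' hξ'', hA5 ξ' ξ'' h hξ' hξ''] at e2
  rw [hη5 ξ' ξ'' h hξ'']
  unfold γstar
  set r := Real.sqrt (2*ξ'') with hrdef
  set t := Real.sqrt (ξ' + h^2) with htdef
  have hr : r^2 = 2*ξ'' := Real.sq_sqrt (by linarith)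
  have hrp : 0 < r := Real.sqrt_pos.mpr (by linarith)
  have ht : t^2 = ξ' + h^2 := Real.sq_sqrt (by nlinarith)
  have htp : 0 < t := Real.sqrt_pos.mpr (by nlinarith)
  have hRpos : 0 < ξ' + ξ'' := by linarith
  -- normalize e1
  have hw' : h*r*γ - (ξ''-ξ')*η = (ξ'+ξ'')*w := by
    field_simp at e1
    linear_combination e1
  -- normalize e2
  have hS' : (h*r*η*(ξ'*(1-γ^2)))*(ξ'+ξ'') =
      (γ*((ξ'+ξ'')*ξ' - h^2*ξ''*(1-γ^2)))*(ξ'+ξ'') := by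
    field_simp at e2
    linear_combination (ξ'+ξ'')*e2
  have hS : h*r*η*(ξ'*(1-γ^2)) = γ*((ξ'+ξ'')*ξ' - h^2*ξ''*(1-γ^2)) :=
    mul_right_cancel₀ (ne_of_gt hRpos) hS'
  have key : h^2*(1-γ^2) = ξ'*γ^2 :=
    keylemma ξ' ξ'' h γ η w r hξ' hξ'' hr hw2 hw' hS
  have hγsq : γ^2 = (h/t)^2 := by
    rw [div_pow, ht, eq_div_iff (by nlinarith)]
    linear_combination -key
  have hγeq : γ = h/t := by
    rw [← Real.sqrt_sq hγ0, hγsq, Real.sqrt_sq (by positivity)]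
  refine ⟨?_, hγeq⟩
  by_cases hc : h = 0
  · -- h = 0 case
    subst hc
    have hsqeq : 4*ξ'*ξ''*η^2 = 2*(ξ'+ξ'')^2 := by
      linear_combination ((ξ''-ξ')*η - (ξ'+ξ'')*w)*hw' - (ξ'+ξ'')^2*hw2
    have hstar_pos : 0 < (ξ' + 0^2 + ξ'') / (r*t) := by positivity
    have hstar_sq : ((ξ' + 0^2 + ξ'') / (r*t))^2 = η^2 := by
      rw [div_pow, mul_pow, hr, ht]
      rw [div_eq_iff (by positivity)]
      linear_combination -hsqeq/2
    rw [← Real.sqrt_sq hηpos.le, ← hstar_sq, Real.sqrt_sq hstar_pos.le]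
  · -- h > 0 case
    have hhp : 0 < h := lt_of_le_of_ne hh (Ne.symm hc)
    rw [hγeq] at hS
    have hSs := star_id ξ' ξ'' h r t hξ' hξ'' hh hr hrp ht htp
    have hth : h < t := by
      rw [htdef]
      exact (Real.lt_sqrt hh).mpr (by linarith)
    have hdt : (h/t)^2 < 1 := by
      apply pow_lt_one₀ (by positivity) ((div_lt_one htp).mpr hth) (by norm_num)
    have hX : 0 < h*r*(ξ'*(1-(h/t)^2)) := by
      have h1 : 0 < 1 - (h/t)^2 := by linarith
      positivity
    have hcan : (h*r*(ξ'*(1-(h/t)^2))) * η =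
        (h*r*(ξ'*(1-(h/t)^2))) * ((ξ' + h^2 + ξ'')/(r*t)) := by
      linear_combination hS - hSs
    exact mul_left_cancel₀ (ne_of_gt hX) hcan

/-- If h² ≥ ξ″ − ξ′, then (η*,γ*) ∈ [√2,∞)×[0,1) is the unique solution there of
A·γ − B·η = √(η²−2) and C·γ + A·η = γ/(1−γ²); if h² < ξ″ − ξ′ there is no solution
in [√2,∞)×[0,1). -/
theorem stmt_7 (ξ' ξ'' h : ℝ) (hξ' : 0 < ξ') (hξ'' : 0 < ξ'') (hh : 0 ≤ h) :
    (ξ'' - ξ' ≤ h ^ 2 →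
      Real.sqrt 2 ≤ ηstar ξ' ξ'' h ∧ 0 ≤ γstar ξ' h ∧ γstar ξ' h < 1 ∧
      A ξ' ξ'' h * γstar ξ' h - B ξ' ξ'' * ηstar ξ' ξ'' h =
        Real.sqrt ((ηstar ξ' ξ'' h) ^ 2 - 2) ∧
      C ξ' ξ'' h * γstar ξ' h + A ξ' ξ'' h * ηstar ξ' ξ'' h =
        γstar ξ' h / (1 - (γstar ξ' h) ^ 2) ∧
      (∀ η γ : ℝ, Real.sqrt 2 ≤ η → 0 ≤ γ → γ < 1 →
        A ξ' ξ'' h * γ - B ξ' ξ'' * η = Real.sqrt (η ^ 2 - 2) →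
        C ξ' ξ'' h * γ + A ξ' ξ'' h * η = γ / (1 - γ ^ 2) →
        η = ηstar ξ' ξ'' h ∧ γ = γstar ξ' h)) ∧
    (h ^ 2 < ξ'' - ξ' →
      ∀ η γ : ℝ, Real.sqrt 2 ≤ η → 0 ≤ γ → γ < 1 →
        ¬(A ξ' ξ'' h * γ - B ξ' ξ'' * η = Real.sqrt (η ^ 2 - 2) ∧
          C ξ' ξ'' h * γ + A ξ' ξ'' h * η = γ / (1 - γ ^ 2))) := by
  constructor
  · intro hge
    refine ⟨etastar_ge ξ' ξ'' h hξ' hξ'', gstar_nonneg ξ' h hh,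
      gstar_lt_one ξ' h hξ' hh, ?_, eq2star ξ' ξ'' h hξ' hξ'' hh, ?_⟩
    · rw [sqstar ξ' ξ'' h hξ' hξ'',
        Real.sqrt_sq (div_nonneg (by linarith) (by positivity)),
        eq1val ξ' ξ'' h hξ' hξ'' hh]
    · intro η γ h1 h2 h3 h4 h5
      exact solve ξ' ξ'' h hξ' hξ'' hh η γ h1 h2 h3 h4 h5
  · intro hlt η γ h1 h2 h3 ⟨e1, e2⟩
    obtain ⟨hη_eq, hγ_eq⟩ := solve ξ' ξ'' h hξ' hξ'' hh η γ h1 h2 h3 e1 e2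
    subst hη_eq hγ_eq
    have h0 := Real.sqrt_nonneg ((ηstar ξ' ξ'' h)^2 - 2)
    rw [← e1, eq1val ξ' ξ'' h hξ' hξ'' hh] at h0
    have hneg : (ξ' + h^2 - ξ'') / (Real.sqrt (2*ξ'') * Real.sqrt (ξ' + h^2)) < 0 :=
      div_neg_of_neg_of_pos (by linarith)
        (by positivity)
    linarith
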